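/- Let (ℤⁿ, w), n ≥ 2, be a weighted grid graph and K ⊂ ℤⁿ a finite set such that w({x,y}) = 1 for every edge {x,y} with both endpoints outside K. If R(x) ≥ 0 for all x ∈ ℤⁿ, then w(e) = 1 for every edge e, i.e. (ℤⁿ, w) is the standard grid graph. -/

import Mathlib

open Filter Topology

noncomputable section

namespace PMT

/-- The `i`-th standard unit vector in `ℤⁿ`. -/
def e (n : ℕ) (i : Fin n) : Fin n → ℤ := fun j => if j = i then 1 else 0

/-- The grid graph on `ℤⁿ`: `x ∼ y` iff `‖x − y‖₁ = 1`. -/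
def grid (n : ℕ) : SimpleGraph (Fin n → ℤ) where
  Adj x y := (∑ i, |x i - y i|) = 1
  symm := by
    refine ⟨?_⟩; intro x y h
    have h' : ∀ i ∈ Finset.univ, |y i - x i| = |x i - y i| :=
      fun i _ => abs_sub_comm _ _
    rw [Finset.sum_congr rfl h']
    exact h
  loopless := by refine ⟨?_⟩; intro x h; simp at h

/-- The graph Laplacian `Δf(x) = Σ_{y∼x} w(x,y)(f(y)−f(x))` of an integer-valued function. -/
def lap {V : Type*} (G : SimpleGraph V) (w : V → V → ℝ) (f : V → ℤ) (x : V) : ℝ :=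
  ∑ᶠ y ∈ {y | G.Adj x y}, w x y * ((f y : ℝ) - (f x : ℝ))

/-- `f : V → ℤ` is 1-Lipschitz with respect to the combinatorial graph distance. -/
def Lip1 {V : Type*} (G : SimpleGraph V) (f : V → ℤ) : Prop :=
  ∀ x y, |f x - f y| ≤ (G.dist x y : ℤ)

/-- Ollivier curvature of the pair `(x, y)`:
`κ(x,y) = inf {Δf(x) − Δf(y) | f : V → ℤ, f 1-Lipschitz, f(y) = f(x) + 1}`. -/
def kappa {V : Type*} (G : SimpleGraph V) (w : V → V → ℝ) (x y : V) : ℝ :=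
  sInf {r | ∃ f : V → ℤ, Lip1 G f ∧ f y = f x + 1 ∧ r = lap G w f x - lap G w f y}

/-- Scalar curvature `R(x) = Σ_{y∼x} κ(x,y)`. -/
def scal {V : Type*} (G : SimpleGraph V) (w : V → V → ℝ) (x : V) : ℝ :=
  ∑ᶠ y ∈ {y | G.Adj x y}, kappa G w x y

/-- A weighted grid graph `(ℤⁿ, w)`: symmetric weights, positive on edges. -/
structure GridWeight (n : ℕ) where
  w : (Fin n → ℤ) → (Fin n → ℤ) → ℝ
  symm : ∀ x y, w x y = w y x
  pos : ∀ x y, (grid n).Adj x y → 0 < w x y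

/-- The quantity `Abs(x)` measuring the distortion from the standard grid graph. -/
def Absf (n : ℕ) (w : (Fin n → ℤ) → (Fin n → ℤ) → ℝ) (x : Fin n → ℤ) : ℝ :=
  ∑ i, ∑ j, if i ≠ j then
      (|w x (x + e n i) - w (x + e n j) (x + e n j + e n i)| +
       |w x (x + e n i) - w (x - e n j) (x - e n j + e n i)| +
       |w x (x - e n i) - w (x + e n j) (x + e n j - e n i)| +
       |w x (x - e n i) - w (x - e n j) (x - e n j - e n i)|)
    else 0

/-- The `ℓ^∞` norm `‖x‖_∞` of `x ∈ ℤⁿ`, as a natural number. -/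
def nInf {n : ℕ} (x : Fin n → ℤ) : ℕ := Finset.univ.sup fun i => (x i).natAbs

/-- The cube `Q_r = {y ∈ ℤⁿ : ‖y‖∞ ≤ r}` as a finset. -/
def Qr (n r : ℕ) : Finset (Fin n → ℤ) := Finset.Icc (fun _ => -(r : ℤ)) (fun _ => (r : ℤ))

/-- `Σ_{e ∈ E_r} w(e)`: the sum of weights of edges with exactly one endpoint in `Q_r`
(each such edge is counted once, via its endpoint inside `Q_r`). -/
def ErSum (n : ℕ) (w : (Fin n → ℤ) → (Fin n → ℤ) → ℝ) (r : ℕ) : ℝ :=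
  ∑ x ∈ Qr n r, ∑ i,
    ((if x + e n i ∉ Qr n r then w x (x + e n i) else 0) +
     (if x - e n i ∉ Qr n r then w x (x - e n i) else 0))

/-- `Σ_{τ ∈ Ẽ_r} w(τ)`: the sum of weights of edges joining the sphere `S_{r+1}` to the
sphere `S_{r+2}` (each such edge is counted once, via its endpoint in `S_{r+1}`). -/
def TErSum (n : ℕ) (w : (Fin n → ℤ) → (Fin n → ℤ) → ℝ) (r : ℕ) : ℝ :=
  ∑ x ∈ Qr n (r + 1), if nInf x = r + 1 then
      (∑ i, ((if nInf (x + e n i) = r + 2 then w x (x + e n i) else 0) +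
             (if nInf (x - e n i) = r + 2 then w x (x - e n i) else 0)))
    else 0

/-- The weighted grid graph `(ℤⁿ, w)` is asymptotically flat: there is `p > n` with
`w = 1 + o(1)`, `Abs(x) = O(‖x‖∞^{−p})` and `|R(x)| = O(‖x‖∞^{−p})` as `‖x‖∞ → ∞`. -/
def AsympFlatGrid (n : ℕ) (W : GridWeight n) : Prop :=
  ∃ p : ℝ, (n : ℝ) < p ∧
    (∀ ε : ℝ, 0 < ε → ∃ M : ℕ, ∀ x y, (grid n).Adj x y → M ≤ nInf x → |W.w x y - 1| ≤ ε) ∧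
    (∃ C : ℝ, ∃ M : ℕ, 0 < M ∧ ∀ x, M ≤ nInf x → Absf n W.w x ≤ C * (nInf x : ℝ) ^ (-p)) ∧
    (∃ C : ℝ, ∃ M : ℕ, 0 < M ∧ ∀ x, M ≤ nInf x → |scal (grid n) W.w x| ≤ C * (nInf x : ℝ) ^ (-p))

/-!
Testing the Ollivier curvature of the edge `(x, x + eᵢ)` against the coordinate `z ↦ zᵢ` bounds it
by the second difference `2 w(x, x+eᵢ) - w(x-eᵢ, x) - w(x+eᵢ, x+2eᵢ)` of the weights along the
line, so `R(x)` is bounded by a sum of second differences. As `w - 1` is finitely supported, these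
bounds sum to zero over `ℤⁿ`, and `R ≥ 0` forces every one of them to be attained. Perturbing the
test function by `±1` on the half-space `{z | zⱼ > xⱼ}` then shows that `w(x, x+eⱼ)` is invariant
under translation by `eᵢ`, `i ≠ j`, so it equals its value far out, which is `1`. In dimension one
the attained bounds say that `w(x, x+e) - w(x-2e, x-e)` is translation invariant, which again
forces `w = 1`.
-/

open Function

section Graph

variable {V : Type*} {G : SimpleGraph V} {w : V → V → ℝ} {f : V → ℤ}

lemma Lip1.abs_sub_le_one (hf : Lip1 G f) {a b : V} (h : G.Adj a b) : |f a - f b| ≤ 1 := by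
  simpa [SimpleGraph.dist_eq_one_iff_adj.mpr h] using hf a b

lemma Lip1.neg (hf : Lip1 G f) : Lip1 G fun z => -f z := fun a b => by
  rw [neg_sub_neg, abs_sub_comm]
  exact hf a b

lemma abs_sub_le_length_of_adj (hf : ∀ a b, G.Adj a b → |f a - f b| ≤ 1) :
    ∀ {a b : V} (p : G.Walk a b), |f a - f b| ≤ p.length
  | _, _, .nil => by simp
  | a, b, .cons (v := v) h q => by
    have := abs_sub_le (f a) (f v) (f b)
    have := hf a v h
    have := abs_sub_le_length_of_adj hf q
    simp only [SimpleGraph.Walk.length_cons, Nat.cast_add, Nat.cast_one]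
    linarith

lemma lip1_of_adj (hG : G.Connected) (hf : ∀ a b, G.Adj a b → |f a - f b| ≤ 1) : Lip1 G f :=
  fun x y => by
    obtain ⟨p, hp⟩ := (hG x y).exists_walk_length_eq_dist
    exact hp ▸ abs_sub_le_length_of_adj hf p

lemma lap_neg (x : V) : lap G w (fun z => -f z) x = -lap G w f x := by
  have h : ∀ y, w x y * (((-f y : ℤ) : ℝ) - ((-f x : ℤ) : ℝ)) = -(w x y * (f y - f x)) := by
    intro y; push_cast; ring
  simp only [lap, h, finsum_neg_distrib]

lemma lap_add {g : V → ℤ} {x : V} (hx : {y | G.Adj x y}.Finite) :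
    lap G w (fun z => f z + g z) x = lap G w f x + lap G w g x := by
  simp only [lap, Int.cast_add, add_sub_add_comm, mul_add]
  exact finsum_mem_add_distrib hx

lemma abs_lap_le {x : V} (hx : {y | G.Adj x y}.Finite) (hf : Lip1 G f) :
    |lap G w f x| ≤ ∑ᶠ y ∈ {y | G.Adj x y}, |w x y| := by
  rw [lap, finsum_mem_eq_finite_toFinset_sum _ hx, finsum_mem_eq_finite_toFinset_sum _ hx]
  refine (Finset.abs_sum_le_sum_abs _ _).trans (Finset.sum_le_sum fun y hy => ?_)
  have hxy : |(f y : ℝ) - f x| ≤ 1 := by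
    rw [abs_sub_comm]
    exact_mod_cast hf.abs_sub_le_one ((Set.Finite.mem_toFinset hx).1 hy)
  rw [abs_mul]
  exact mul_le_of_le_one_right (abs_nonneg _) hxy

lemma kappa_le {x y : V} (hx : {y | G.Adj x y}.Finite) (hy : {z | G.Adj y z}.Finite)
    (hf : Lip1 G f) (hfy : f y = f x + 1) : kappa G w x y ≤ lap G w f x - lap G w f y := by
  refine csInf_le ⟨-(∑ᶠ z ∈ {z | G.Adj x z}, |w x z|) - ∑ᶠ z ∈ {z | G.Adj y z}, |w y z|, ?_⟩
    ⟨f, hf, hfy, rfl⟩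
  rintro r ⟨g, hg, -, rfl⟩
  have := abs_le.1 (abs_lap_le (w := w) hx hg)
  have := abs_le.1 (abs_lap_le (w := w) hy hg)
  linarith

lemma kappa_comm (x y : V) : kappa G w x y = kappa G w y x := by
  unfold kappa
  congr 1
  ext r
  constructor <;> rintro ⟨f, hf, hfy, rfl⟩ <;>
    exact ⟨fun z => -f z, hf.neg, by simp [hfy], by rw [lap_neg, lap_neg]; ring⟩

end Graph

section Grid

variable {n : ℕ}

lemma grid_adj_add_e (x : Fin n → ℤ) (i : Fin n) : (grid n).Adj x (x + e n i) := by
  simp [grid, e, apply_ite (fun t : ℤ => |t|)]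

lemma grid_adj_sub_e (x : Fin n → ℤ) (i : Fin n) : (grid n).Adj x (x - e n i) := by
  simp [grid, e, apply_ite (fun t : ℤ => |t|)]

lemma grid_adj_iff {x y : Fin n → ℤ} :
    (grid n).Adj x y ↔ ∃ i, y = x + e n i ∨ y = x - e n i := by
  refine ⟨fun h => ?_, ?_⟩
  · have hsum : ∑ k, |x k - y k| = 1 := h
    obtain ⟨i, hi⟩ : ∃ i, x i ≠ y i := by
      by_contra! hc
      simp [hc] at hsum
    have hsplit := Finset.add_sum_erase Finset.univ (fun k => |x k - y k|) (Finset.mem_univ i)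
    have hrest : ∑ k ∈ Finset.univ.erase i, |x k - y k| = 0 := by
      have : 0 < |x i - y i| := abs_pos.2 (sub_ne_zero.2 hi)
      have := Finset.sum_nonneg fun k (_ : k ∈ Finset.univ.erase i) => abs_nonneg (x k - y k)
      linarith
    have hk : ∀ k ≠ i, y k = x k := fun k hk => by
      have := (Finset.sum_eq_zero_iff_of_nonneg fun k _ => abs_nonneg (x k - y k)).1 hrest k
        (Finset.mem_erase.2 ⟨hk, Finset.mem_univ k⟩)
      rw [abs_eq_zero] at this
      omega
    have hi1 : y i = x i + 1 ∨ y i = x i - 1 := by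
      have : |x i - y i| = 1 := by linarith
      rcases abs_cases (x i - y i) with ⟨h, -⟩ | ⟨h, -⟩ <;> omega
    refine ⟨i, hi1.imp (fun h => ?_) (fun h => ?_)⟩ <;> funext k <;> by_cases hki : k = i <;>
      simp [e, hki, h, hk]
  · rintro ⟨i, rfl | rfl⟩
    exacts [grid_adj_add_e x i, grid_adj_sub_e x i]

lemma setOf_grid_adj (x : Fin n → ℤ) :
    {y | (grid n).Adj x y} = Set.range (Sum.elim (fun i => x + e n i) fun i => x - e n i) := by
  ext y
  simp [grid_adj_iff, eq_comm, exists_or]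

lemma injective_sumElim_add_e_sub_e (x : Fin n → ℤ) :
    Injective (Sum.elim (fun i => x + e n i) fun i => x - e n i) := by
  have he : Injective (e n) := fun i j h => by simpa [e] using congrFun h i
  refine (add_right_injective x |>.comp he).sumElim (sub_right_injective.comp he) fun i j h => ?_
  have := congrFun h i
  simp [e] at this
  split_ifs at this <;> omega

lemma finite_setOf_grid_adj (x : Fin n → ℤ) : {y | (grid n).Adj x y}.Finite := by
  rw [setOf_grid_adj]
  exact Set.finite_range _

lemma finsum_grid_adj {M : Type*} [AddCommMonoid M] (x : Fin n → ℤ) (F : (Fin n → ℤ) → M) :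
    ∑ᶠ y ∈ {y | (grid n).Adj x y}, F y = ∑ i, F (x + e n i) + ∑ i, F (x - e n i) := by
  rw [setOf_grid_adj, finsum_mem_range (injective_sumElim_add_e_sub_e x), finsum_eq_sum_of_fintype,
    Fintype.sum_sum_type]
  rfl

lemma grid_connected : (grid n).Connected := by
  let H : AddSubgroup (Fin n → ℤ) :=
    { carrier := {v | ∀ x, (grid n).Reachable x (x + v)}
      zero_mem' := fun x => by simp
      add_mem' := fun {a b} ha hb x => (ha x).trans (by simpa [add_assoc] using hb (x + a))
      neg_mem' := fun {a} ha x => by simpa using (ha (x + -a)).symm }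
  have he : ∀ i, e n i ∈ H := fun i x => (grid_adj_add_e x i).reachable
  have hv : ∀ v, v ∈ H := fun v => by
    have : v = ∑ i, v i • e n i := by ext j; simp [e, Finset.sum_apply]
    rw [this]
    exact H.sum_mem fun i _ => H.zsmul_mem (he i) _
  exact ⟨fun x y => by simpa using hv (y - x) x⟩

lemma e_ne_zero (i : Fin n) : e n i ≠ 0 := fun h => by simpa [e] using congrFun h i

end Grid

section GridLaplacian

variable {n : ℕ} (w : (Fin n → ℤ) → (Fin n → ℤ) → ℝ)

lemma lap_grid (f : (Fin n → ℤ) → ℤ) (x : Fin n → ℤ) :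
    lap (grid n) w f x = ∑ i, w x (x + e n i) * (f (x + e n i) - f x) +
      ∑ i, w x (x - e n i) * (f (x - e n i) - f x) :=
  finsum_grid_adj x _

lemma lap_grid_coord (i : Fin n) (x : Fin n → ℤ) :
    lap (grid n) w (fun z => z i) x = w x (x + e n i) - w x (x - e n i) := by
  simp [lap_grid, e, sub_eq_add_neg]

lemma lap_grid_step (j : Fin n) (t c : ℤ) {x : Fin n → ℤ} (hx : x j = t) :
    lap (grid n) w (fun z => if t < z j then c else 0) x = w x (x + e n j) * c := by
  have ht : ¬ t < t - 1 := by omega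
  simp [lap_grid, e, hx, apply_ite (fun s : ℤ => 0 < s), apply_ite (fun s : ℤ => t < t - s), ht]

lemma lip1_coord (i : Fin n) : Lip1 (grid n) fun z => z i := by
  refine lip1_of_adj grid_connected fun a b h => ?_
  obtain ⟨k, rfl | rfl⟩ := grid_adj_iff.1 h <;> simp [e] <;> split_ifs <;> simp

lemma lip1_coord_add_step {i j : Fin n} (hij : i ≠ j) (t : ℤ) {c : ℤ} (hc : |c| ≤ 1) :
    Lip1 (grid n) fun z => z i + if t < z j then c else 0 := by
  refine lip1_of_adj grid_connected fun a b h => ?_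
  rw [abs_le] at hc ⊢
  obtain ⟨k, rfl | rfl⟩ := grid_adj_iff.1 h <;> simp [e] <;> split_ifs <;> omega

end GridLaplacian

section FiniteSupport

variable {G M : Type*}

lemma _root_.Function.HasFiniteSupport.comp_add_right [AddGroup G] [Zero M] {g : G → M}
    (hg : HasFiniteSupport g) (v : G) : HasFiniteSupport fun x => g (x + v) :=
  hg.comp_of_injective (add_left_injective v)

lemma _root_.Function.HasFiniteSupport.comp_sub_right [AddGroup G] [Zero M] {g : G → M}
    (hg : HasFiniteSupport g) (v : G) : HasFiniteSupport fun x => g (x - v) :=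
  hg.comp_of_injective (sub_left_injective)

lemma finsum_sub_comp_add_right [AddGroup G] [AddCommGroup M] {g : G → M}
    (hg : HasFiniteSupport g) (v : G) : ∑ᶠ x, (g x - g (x + v)) = 0 := by
  rw [finsum_sub_distrib hg (hg.comp_add_right v), sub_eq_zero]
  exact (finsum_comp_equiv (Equiv.addRight v)).symm

lemma _root_.Function.Periodic.eq_zero_of_hasFiniteSupport [AddCommGroup G]
    [Module.IsTorsionFree ℤ G] [Zero M] {g : G → M} {v : G} (hg : Periodic g v) (hv : v ≠ 0)
    (hfin : HasFiniteSupport g) : g = 0 := by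
  funext x
  by_contra hx
  refine Set.infinite_range_of_injective ((add_right_injective x).comp (smul_left_injective ℤ hv))
    (Set.Finite.subset hfin ?_)
  rintro _ ⟨m, rfl⟩
  simpa [mem_support, hg.zsmul m x] using hx

lemma eq_zero_of_finsum_eq_zero_of_nonneg [AddCommMonoid M] [PartialOrder M]
    [IsOrderedAddMonoid M] {g : G → M} (hfin : HasFiniteSupport g) (h0 : 0 ≤ g)
    (hsum : ∑ᶠ x, g x = 0) : g = 0 := by
  funext x
  rw [finsum_eq_sum g hfin] at hsum
  by_cases hx : x ∈ support g
  · exact (Finset.sum_eq_zero_iff_of_nonneg fun y _ => h0 y).1 hsum x (hfin.mem_toFinset.2 hx)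
  · exact notMem_support.1 hx

end FiniteSupport

namespace GridWeight

variable {n : ℕ} (W : GridWeight n)

def edge (i : Fin n) (x : Fin n → ℤ) : ℝ := W.w x (x + e n i)

def kappaBound (i : Fin n) (x : Fin n → ℤ) : ℝ :=
  2 * W.edge i x - W.edge i (x - e n i) - W.edge i (x + e n i)

lemma w_sub_e (x : Fin n → ℤ) (i : Fin n) : W.w x (x - e n i) = W.edge i (x - e n i) := by
  rw [edge, sub_add_cancel, W.symm]

lemma kappa_le_kappaBound (x : Fin n → ℤ) (i : Fin n) :
    kappa (grid n) W.w x (x + e n i) ≤ W.kappaBound i x := by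
  have h := kappa_le (w := W.w) (finite_setOf_grid_adj x) (finite_setOf_grid_adj _)
    (lip1_coord i) (by simp [e] : (x + e n i) i = x i + 1)
  rw [lap_grid_coord, lap_grid_coord, add_sub_cancel_right, w_sub_e, W.symm (x + e n i) x] at h
  unfold kappaBound edge at *
  linarith

lemma kappa_sub_e_le_kappaBound (x : Fin n → ℤ) (i : Fin n) :
    kappa (grid n) W.w x (x - e n i) ≤ W.kappaBound i (x - e n i) := by
  rw [kappa_comm]
  simpa using W.kappa_le_kappaBound (x - e n i) i

lemma scal_le_sum_kappaBound (x : Fin n → ℤ) :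
    scal (grid n) W.w x ≤ ∑ i, (W.kappaBound i x + W.kappaBound i (x - e n i)) := by
  rw [scal, finsum_grid_adj, Finset.sum_add_distrib]
  gcongr with i
  exacts [W.kappa_le_kappaBound x i, W.kappa_sub_e_le_kappaBound x i]

lemma kappa_le_kappaBound_add_step {i j : Fin n} (hij : i ≠ j) (x : Fin n → ℤ) {c : ℤ}
    (hc : |c| ≤ 1) :
    kappa (grid n) W.w x (x + e n i) ≤
      W.kappaBound i x + c * (W.edge j x - W.edge j (x + e n i)) := by
  have hxj : (x + e n i) j = x j := by simp [e, hij.symm]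
  have hstep : (x + e n i) i + (if x j < (x + e n i) j then c else 0) =
      x i + (if x j < x j then c else 0) + 1 := by
    rw [hxj]; simp [e]
  have h := kappa_le (w := W.w) (finite_setOf_grid_adj x) (finite_setOf_grid_adj _)
    (lip1_coord_add_step hij (x j) hc) hstep
  rw [lap_add (finite_setOf_grid_adj _), lap_add (finite_setOf_grid_adj _), lap_grid_coord,
    lap_grid_coord, lap_grid_step _ j _ _ rfl, lap_grid_step _ j _ _ hxj, add_sub_cancel_right,
    w_sub_e, W.symm (x + e n i) x] at h
  unfold kappaBound edge at *
  linarith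

lemma hasFiniteSupport_edge_sub_one {K : Set (Fin n → ℤ)}
    (hK : K.Finite) (hout : ∀ x y, (grid n).Adj x y → x ∉ K → y ∉ K → W.w x y = 1) (i : Fin n) :
    HasFiniteSupport fun x => W.edge i x - 1 := by
  refine (hK.union (hK.preimage (add_left_injective (e n i)).injOn)).subset fun x hx => ?_
  by_contra h
  simp only [Set.mem_union, Set.mem_preimage, not_or] at h
  exact hx (sub_eq_zero.2 (hout _ _ (grid_adj_add_e x i) h.1 h.2))

lemma kappaBound_eq (i : Fin n) (x : Fin n → ℤ) :
    W.kappaBound i x = ((W.edge i x - 1) - (W.edge i (x + e n i) - 1)) +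
      ((W.edge i x - 1) - (W.edge i (x + -e n i) - 1)) := by
  rw [kappaBound, ← sub_eq_add_neg]
  ring

variable {W}

section

variable {i : Fin n}

lemma hasFiniteSupport_kappaBound (hfin : HasFiniteSupport fun x => W.edge i x - 1) :
    HasFiniteSupport (W.kappaBound i) := by
  rw [funext (W.kappaBound_eq i)]
  exact ((hfin.fun_sub (hfin.comp_add_right _)).fun_add (hfin.fun_sub (hfin.comp_add_right _)))

lemma finsum_kappaBound (hfin : HasFiniteSupport fun x => W.edge i x - 1) :
    ∑ᶠ x, W.kappaBound i x = 0 := by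
  simp only [W.kappaBound_eq i]
  rw [finsum_add_distrib (hfin.fun_sub (hfin.comp_add_right _))
    (hfin.fun_sub (hfin.comp_add_right _)),
    finsum_sub_comp_add_right hfin, finsum_sub_comp_add_right hfin, add_zero]

lemma finsum_sum_kappaBound (hfin : ∀ i, HasFiniteSupport fun x => W.edge i x - 1) :
    ∑ᶠ x, ∑ i, (W.kappaBound i x + W.kappaBound i (x - e n i)) = 0 := by
  rw [finsum_sum_comm _ _ fun i _ => (hasFiniteSupport_kappaBound (hfin i)).fun_add
    ((hasFiniteSupport_kappaBound (hfin i)).comp_sub_right _)]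
  refine Finset.sum_eq_zero fun i _ => ?_
  rw [finsum_add_distrib (hasFiniteSupport_kappaBound (hfin i))
    ((hasFiniteSupport_kappaBound (hfin i)).comp_sub_right _),
    show ∑ᶠ x, W.kappaBound i (x - e n i) = _ from finsum_comp_equiv (Equiv.subRight (e n i)),
    finsum_kappaBound (hfin i), add_zero]

end

variable (hfin : ∀ i, HasFiniteSupport fun x => W.edge i x - 1)
  (hR : ∀ x, 0 ≤ scal (grid n) W.w x)
include hfin hR

lemma sum_kappaBound_eq_zero (x : Fin n → ℤ) :
    ∑ i, (W.kappaBound i x + W.kappaBound i (x - e n i)) = 0 :=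
  congrFun (eq_zero_of_finsum_eq_zero_of_nonneg
    (HasFiniteSupport.sum (fun i => (hasFiniteSupport_kappaBound (hfin i)).fun_add
      ((hasFiniteSupport_kappaBound (hfin i)).comp_sub_right _)) _)
    (fun x => (hR x).trans (W.scal_le_sum_kappaBound x)) (finsum_sum_kappaBound hfin)) x

lemma kappa_eq_kappaBound (x : Fin n → ℤ) (i : Fin n) :
    kappa (grid n) W.w x (x + e n i) = W.kappaBound i x := by
  have hle : ∀ i ∈ Finset.univ,
      kappa (grid n) W.w x (x + e n i) + kappa (grid n) W.w x (x - e n i) ≤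
        W.kappaBound i x + W.kappaBound i (x - e n i) := fun i _ =>
    add_le_add (W.kappa_le_kappaBound x i) (W.kappa_sub_e_le_kappaBound x i)
  have hscal := hR x
  rw [scal, finsum_grid_adj, ← Finset.sum_add_distrib] at hscal
  have hi := (Finset.sum_eq_sum_iff_of_le hle).1
    ((Finset.sum_le_sum hle).antisymm (by linarith [sum_kappaBound_eq_zero hfin hR x])) i
    (Finset.mem_univ i)
  linarith [W.kappa_le_kappaBound x i, W.kappa_sub_e_le_kappaBound x i]

lemma edge_add_e {i j : Fin n} (hij : i ≠ j) (x : Fin n → ℤ) :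
    W.edge j (x + e n i) = W.edge j x := by
  have h := kappa_eq_kappaBound hfin hR x i
  have h₁ := W.kappa_le_kappaBound_add_step hij x (c := 1) (by norm_num)
  have h₂ := W.kappa_le_kappaBound_add_step hij x (c := -1) (by norm_num)
  push_cast at h₁ h₂
  linarith

lemma edge_eq_one_of_ne {i j : Fin n} (hij : i ≠ j) (x : Fin n → ℤ) : W.edge j x = 1 := by
  have hper : Periodic (fun x => W.edge j x - 1) (e n i) := fun x => by
    simp only [edge_add_e hfin hR hij]
  have := congrFun (hper.eq_zero_of_hasFiniteSupport (e_ne_zero i) (hfin j)) x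
  simpa [sub_eq_zero] using this

lemma edge_eq_one_of_forall_eq {i : Fin n} (hi : ∀ j, j = i) (x : Fin n → ℤ) :
    W.edge i x = 1 := by
  have hsum (x : Fin n → ℤ) : W.kappaBound i x + W.kappaBound i (x - e n i) = 0 := by
    simpa [Fintype.sum_eq_single i fun j hj => (hj (hi j)).elim] using
      sum_kappaBound_eq_zero hfin hR x
  have hper : Periodic (fun x => W.edge i x - W.edge i (x - (e n i + e n i))) (e n i) :=
    fun x => by
      have := hsum x
      beta_reduce
      rw [show x + e n i - (e n i + e n i) = x - e n i by abel]
      simp only [kappaBound, sub_add_cancel, sub_sub] at this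
      linarith
  have hfin₂ : HasFiniteSupport fun x => W.edge i x - W.edge i (x - (e n i + e n i)) := by
    simpa using (hfin i).fun_sub ((hfin i).comp_sub_right (e n i + e n i))
  have hper₂ : Periodic (fun x => W.edge i x - 1) (e n i + e n i) := fun x => by
    have := congrFun (hper.eq_zero_of_hasFiniteSupport (e_ne_zero i) hfin₂) (x + (e n i + e n i))
    simp only [add_sub_cancel_right, Pi.zero_apply, sub_eq_zero] at this
    simp [this]
  have htwo : e n i + e n i ≠ 0 := fun h => by simpa [e] using congrFun h i
  simpa [sub_eq_zero] using congrFun (hper₂.eq_zero_of_hasFiniteSupport htwo (hfin i)) x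

end GridWeight

/-- a weighted grid graph with trivial weights outside a finite set and
nonnegative scalar curvature is the standard grid graph. -/
theorem grid_trivial_outside_finite (n : ℕ) (W : GridWeight n) (K : Set (Fin n → ℤ))
    (hK : K.Finite)
    (hout : ∀ x y, (grid n).Adj x y → x ∉ K → y ∉ K → W.w x y = 1)
    (hR : ∀ x, 0 ≤ scal (grid n) W.w x) :
    ∀ x y, (grid n).Adj x y → W.w x y = 1 := by
  have hfin := W.hasFiniteSupport_edge_sub_one hK hout
  have hedge (i : Fin n) (x : Fin n → ℤ) : W.edge i x = 1 := by
    by_cases h : ∀ j, j = i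
    · exact GridWeight.edge_eq_one_of_forall_eq hfin hR h x
    · obtain ⟨j, hj⟩ := not_forall.1 h
      exact GridWeight.edge_eq_one_of_ne hfin hR hj x
  intro x y hxy
  obtain ⟨i, rfl | rfl⟩ := grid_adj_iff.1 hxy
  · exact hedge i x
  · rw [W.w_sub_e]
    exact hedge i _

end PMT
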